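/- Let N be a complete nest and L a weakly closed Lie T(N)-module. If P ∈ N satisfies P^⊥ L P ≠ {0}, then P L P^⊥ = P B(H) P^⊥; that is, every operator of the form P A P^⊥ with A ∈ B(H) belongs to L. -/

import Mathlib

/-!
The corners `S = P A P^⊥` lie in `T(N)` and multiply to zero, so for `T ∈ L` the double
commutator `[[T, S₁], S₂] = -(S₁ T S₂ + S₂ T S₁)` lies in `L`. For the rank-one corners
`S(x, y) = (P^⊥ x) ⊗ (P y)` this is the symmetric relation
`c(x₁, y₂) S(x₂, y₁) + c(x₂, y₁) S(x₁, y₂) ∈ L` with coefficients `c(x, y) = ⟪P^⊥ x, T P y⟫`,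
not all zero once `P^⊥ T P ≠ 0`; this forces every `S(x, y)` into `L`. Finite sums of these
agree with any `P A P^⊥` on any finite set of vectors, so weak closedness of `L` gives
`P A P^⊥ ∈ L`.
-/

/-- The order on orthogonal projections: `P ≤ Q` encoded as `P*Q = P ∧ Q*P = P`. -/
def opLe {H : Type} [NormedAddCommGroup H] [InnerProductSpace ℂ H]
    (P Q : H →L[ℂ] H) : Prop := P * Q = P ∧ Q * P = P

/-- Strict order on projections. -/
def opLt {H : Type} [NormedAddCommGroup H] [InnerProductSpace ℂ H]
    (P Q : H →L[ℂ] H) : Prop := opLe P Q ∧ P ≠ Q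

/-- A complete nest: a totally ordered complete sublattice of the lattice of orthogonal
projections on `H`, containing `0` and `1`.  Completeness means that every subset has a
least upper bound and a greatest lower bound (computed in the full projection lattice)
belonging to the nest. -/
structure IsNest {H : Type} [NormedAddCommGroup H] [InnerProductSpace ℂ H] [CompleteSpace H]
    (N : Set (H →L[ℂ] H)) : Prop where
  proj : ∀ P ∈ N, IsSelfAdjoint P ∧ IsIdempotentElem P
  zero_mem : (0 : H →L[ℂ] H) ∈ N
  one_mem : (1 : H →L[ℂ] H) ∈ N
  total : ∀ P ∈ N, ∀ Q ∈ N, opLe P Q ∨ opLe Q P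
  complete_sup : ∀ S ⊆ N, ∃ B ∈ N, (∀ P ∈ S, opLe P B) ∧
    ∀ C : H →L[ℂ] H, IsSelfAdjoint C → IsIdempotentElem C → (∀ P ∈ S, opLe P C) → opLe B C
  complete_inf : ∀ S ⊆ N, ∃ B ∈ N, (∀ P ∈ S, opLe B P) ∧
    ∀ C : H →L[ℂ] H, IsSelfAdjoint C → IsIdempotentElem C → (∀ P ∈ S, opLe C P) → opLe C B

/-- `B` is the supremum, taken in the nest `N`, of the subset `S` of `N`. -/
def IsNestSup {H : Type} [NormedAddCommGroup H] [InnerProductSpace ℂ H]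
    (N S : Set (H →L[ℂ] H)) (B : H →L[ℂ] H) : Prop :=
  B ∈ N ∧ (∀ P ∈ S, opLe P B) ∧ ∀ C ∈ N, (∀ P ∈ S, opLe P C) → opLe B C

/-- `B` is the infimum, taken in the nest `N`, of the subset `S` of `N`. -/
def IsNestInf {H : Type} [NormedAddCommGroup H] [InnerProductSpace ℂ H]
    (N S : Set (H →L[ℂ] H)) (B : H →L[ℂ] H) : Prop :=
  B ∈ N ∧ (∀ P ∈ S, opLe B P) ∧ ∀ C ∈ N, (∀ P ∈ S, opLe C P) → opLe C B

/-- The nest algebra `T(N)` of a nest `N`: all `T` with `P^⊥ T P = 0` for all `P ∈ N`. -/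
def nestAlg {H : Type} [NormedAddCommGroup H] [InnerProductSpace ℂ H]
    (N : Set (H →L[ℂ] H)) : Set (H →L[ℂ] H) :=
  {T | ∀ P ∈ N, (1 - P) * T * P = 0}

/-- A subset of `B(H)` is weakly closed if it is closed in the weak operator topology. -/
def WClosed {H : Type} [NormedAddCommGroup H] [InnerProductSpace ℂ H] [CompleteSpace H]
    (M : Set (H →L[ℂ] H)) : Prop :=
  IsClosed (ContinuousLinearMapWOT.ofCLM '' M)

/-- The closure of a subset of `B(H)` in the weak operator topology. -/
def wClosure {H : Type} [NormedAddCommGroup H] [InnerProductSpace ℂ H] [CompleteSpace H]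
    (S : Set (H →L[ℂ] H)) : Set (H →L[ℂ] H) :=
  ContinuousLinearMapWOT.ofCLM ⁻¹' (closure (ContinuousLinearMapWOT.ofCLM '' S))

/-- The rank-one operator `x ⊗ y : z ↦ ⟨z,x⟩y` (inner product linear in its first variable,
i.e. `⟨z,x⟩ = ⟪x,z⟫` in Mathlib's convention). -/
noncomputable def rankOne {H : Type} [NormedAddCommGroup H] [InnerProductSpace ℂ H]
    (x y : H) : H →L[ℂ] H :=
  (innerSL ℂ x).smulRight y

open ContinuousLinearMap
open scoped InnerProductSpace

section Corner

variable {R : Type*} [Ring R] {p : R}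

theorem IsIdempotentElem.corner_mul_corner (hp : IsIdempotentElem p) (a b : R) :
    (p * a * (1 - p)) * (p * b * (1 - p)) = 0 := by
  have : (p * a * (1 - p)) * (p * b * (1 - p)) = p * a * ((1 - p) * p) * b * (1 - p) := by
    noncomm_ring
  rw [this, hp.one_sub_mul_self, mul_zero, zero_mul, zero_mul]

theorem IsIdempotentElem.mul_corner_mul (hp : IsIdempotentElem p) (a : R) :
    p * (p * a * (1 - p)) * (1 - p) = p * a * (1 - p) := by
  have : p * (p * a * (1 - p)) * (1 - p) = (p * p) * a * ((1 - p) * (1 - p)) := by noncomm_ring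
  rw [this, hp.eq, hp.one_sub.eq]

theorem commutator_commutator_of_mul_eq_zero {s t u : R} (hsu : s * u = 0) (hus : u * s = 0) :
    (t * s - s * t) * u - u * (t * s - s * t) = -(s * t * u + u * t * s) := by
  have : (t * s - s * t) * u - u * (t * s - s * t)
      = t * (s * u) + (u * s) * t - (s * t * u + u * t * s) := by noncomm_ring
  rw [this, hsu, hus, mul_zero, zero_mul, zero_add, zero_sub]

end Corner

theorem Submodule.mem_of_smul_add_smul_mem {K M α β : Type*} [Field K] [NeZero (2 : K)]
    [AddCommGroup M] [Module K M] (L : Submodule K M) (c : α → β → K) (S : α → β → M)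
    (h : ∀ x₁ y₁ x₂ y₂, c x₁ y₂ • S x₂ y₁ + c x₂ y₁ • S x₁ y₂ ∈ L)
    {x₀ : α} {y₀ : β} (h₀ : c x₀ y₀ ≠ 0) (x : α) (y : β) : S x y ∈ L := by
  have hS₀ : S x₀ y₀ ∈ L := by
    have h2 := h x₀ y₀ x₀ y₀
    rw [← two_smul K, smul_smul] at h2
    exact (L.smul_mem_iff (mul_ne_zero two_ne_zero h₀)).mp h2
  have hxy := L.sub_mem (h x₀ y x y₀) (L.smul_mem (c x y) hS₀)
  rw [add_sub_cancel_right] at hxy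
  exact (L.smul_mem_iff h₀).mp hxy

section RankOne

/- Mathlib's `InnerProductSpace.rankOne 𝕜 y x` is `z ↦ ⟪x, z⟫ • y`, i.e. `rankOne x y` above. -/

variable {𝕜 E : Type*} [RCLike 𝕜] [NormedAddCommGroup E] [InnerProductSpace 𝕜 E]

theorem mul_rankOne_mul [CompleteSpace E] (X Y : E →L[𝕜] E) (a b : E) :
    X * InnerProductSpace.rankOne 𝕜 a b * Y
      = InnerProductSpace.rankOne 𝕜 (X a) (adjoint Y b) := by
  simp only [mul_def, InnerProductSpace.comp_rankOne, InnerProductSpace.rankOne_comp]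

theorem rankOne_mul_mul_rankOne (T : E →L[𝕜] E) (a b c d : E) :
    InnerProductSpace.rankOne 𝕜 a b * T * InnerProductSpace.rankOne 𝕜 c d
      = ⟪b, T c⟫_𝕜 • InnerProductSpace.rankOne 𝕜 a d := by
  simp [mul_def, InnerProductSpace.comp_rankOne]

theorem exists_inner_apply_ne_zero {M : E →L[𝕜] E} (hM : M ≠ 0) : ∃ x y, ⟪x, M y⟫_𝕜 ≠ 0 := by
  obtain ⟨y, hy⟩ : ∃ y, M y ≠ 0 := by
    by_contra! h
    exact hM (ext h)
  exact ⟨M y, y, inner_self_ne_zero.mpr hy⟩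

end RankOne

section WeakClosure

variable {H : Type} [NormedAddCommGroup H] [InnerProductSpace ℂ H] [CompleteSpace H]

theorem WClosed.mem_of_forall_finset {M : Set (H →L[ℂ] H)} (hM : WClosed M) {A : H →L[ℂ] H}
    (h : ∀ J : Finset H, ∃ s ∈ M, Set.EqOn s A J) : A ∈ M := by
  choose s hsM hsA using h
  have htend : Filter.Tendsto (fun J ↦ ContinuousLinearMapWOT.ofCLM (s J)) Filter.atTop
      (nhds (ContinuousLinearMapWOT.ofCLM A)) := by
    rw [ContinuousLinearMapWOT.tendsto_iff_forall_dual_apply_tendsto]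
    intro x y
    refine tendsto_const_nhds.congr' ?_
    filter_upwards [Filter.eventually_ge_atTop {x}] with J hJ
    simp only [ContinuousLinearMapWOT.coe_ofCLM, hsA J (hJ (Finset.mem_singleton_self x))]
  obtain ⟨B, hB, hBA⟩ : ContinuousLinearMapWOT.ofCLM A ∈ ContinuousLinearMapWOT.ofCLM '' M :=
    hM.closure_eq ▸ mem_closure_of_tendsto htend (.of_forall fun J ↦ ⟨s J, hsM J, rfl⟩)
  rwa [← ContinuousLinearMapWOT.ofCLM_injective hBA]

/-- On a finite set `J`, `P A Q` agrees with `P A E Q`, where `E` is the orthogonal projection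
onto the span of `Q J`; and `P A E Q` is a finite sum of the rank-one operators assumed in `L`. -/
theorem mul_mul_mem_of_rankOne_mem {L : Submodule ℂ (H →L[ℂ] H)}
    (hL : WClosed (L : Set (H →L[ℂ] H))) {P Q : H →L[ℂ] H}
    (hrank : ∀ x y, InnerProductSpace.rankOne ℂ (P x) (adjoint Q y) ∈ L) (A : H →L[ℂ] H) :
    P * A * Q ∈ L := by
  classical
  refine hL.mem_of_forall_finset fun J ↦ ?_
  let V := Submodule.span ℂ (J.image Q : Set H)
  let b := stdOrthonormalBasis ℂ V
  refine ⟨P * A * V.starProjection * Q, ?_, fun x hx ↦ ?_⟩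
  · rw [b.starProjection_eq_sum_rankOne, Finset.mul_sum, Finset.sum_mul]
    exact L.sum_mem fun i _ ↦ by rw [mul_rankOne_mul]; exact hrank _ _
  · have hQx : Q x ∈ V := Submodule.subset_span (Finset.mem_image_of_mem Q hx)
    show P (A (V.starProjection (Q x))) = P (A (Q x))
    rw [V.starProjection_eq_self_iff.mpr hQx]

end WeakClosure

section NestAlgebra

variable {H : Type} [NormedAddCommGroup H] [InnerProductSpace ℂ H] [CompleteSpace H]
  {N : Set (H →L[ℂ] H)} {P : H →L[ℂ] H}

theorem corner_mem_nestAlg (hN : IsNest N) (hP : P ∈ N) (A : H →L[ℂ] H) :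
    P * A * (1 - P) ∈ nestAlg N := by
  intro Q hQ
  have hassoc : (1 - Q) * (P * A * (1 - P)) * Q = ((1 - Q) * P) * A * ((1 - P) * Q) := by
    noncomm_ring
  rcases hN.total Q hQ P hP with ⟨-, hPQ⟩ | ⟨-, hQP⟩
  · rw [hassoc, sub_mul 1 P Q, one_mul, hPQ, sub_self, mul_zero]
  · rw [hassoc, sub_mul 1 Q P, one_mul, hQP, sub_self, zero_mul, zero_mul]

end NestAlgebra

section LieModule

variable {H : Type} [NormedAddCommGroup H] [InnerProductSpace ℂ H] [CompleteSpace H]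
  {N : Set (H →L[ℂ] H)} {L : Submodule ℂ (H →L[ℂ] H)} {P T : H →L[ℂ] H}

theorem corner_mul_mul_corner_add_mem (hN : IsNest N)
    (hLie : ∀ T ∈ L, ∀ S ∈ nestAlg N, T * S - S * T ∈ L) (hP : P ∈ N) (hT : T ∈ L)
    (A B : H →L[ℂ] H) :
    P * A * (1 - P) * T * (P * B * (1 - P)) + P * B * (1 - P) * T * (P * A * (1 - P)) ∈ L := by
  have hP' := (hN.proj P hP).2
  have h := hLie _ (hLie T hT _ (corner_mem_nestAlg hN hP A)) _ (corner_mem_nestAlg hN hP B)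
  rwa [commutator_commutator_of_mul_eq_zero (hP'.corner_mul_corner A B)
    (hP'.corner_mul_corner B A), neg_mem_iff] at h

theorem inner_smul_rankOne_add_inner_smul_rankOne_mem (hN : IsNest N)
    (hLie : ∀ T ∈ L, ∀ S ∈ nestAlg N, T * S - S * T ∈ L) (hP : P ∈ N) (hT : T ∈ L)
    (x₁ y₁ x₂ y₂ : H) :
    ⟪(1 - P) x₁, T (P y₂)⟫_ℂ • InnerProductSpace.rankOne ℂ (P y₁) ((1 - P) x₂)
      + ⟪(1 - P) x₂, T (P y₁)⟫_ℂ • InnerProductSpace.rankOne ℂ (P y₂) ((1 - P) x₁) ∈ L := by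
  have hQ : IsSelfAdjoint (1 - P) := .sub (.one _) (hN.proj P hP).1
  have h := corner_mul_mul_corner_add_mem hN hLie hP hT
    (InnerProductSpace.rankOne ℂ y₁ x₁) (InnerProductSpace.rankOne ℂ y₂ x₂)
  rwa [mul_rankOne_mul, mul_rankOne_mul, hQ.adjoint_eq, rankOne_mul_mul_rankOne,
    rankOne_mul_mul_rankOne] at h

end LieModule

/-- If `L` is a weakly closed Lie `T(N)`-module and `P ∈ N` satisfies `P^⊥ L P ≠ {0}`,
then `P L P^⊥ = P B(H) P^⊥`; in particular every `P A P^⊥` with `A ∈ B(H)` lies in `L`. -/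
theorem corner_full_of_lower_corner_nonzero
    {H : Type} [NormedAddCommGroup H] [InnerProductSpace ℂ H] [CompleteSpace H]
    (N : Set (H →L[ℂ] H)) (hN : IsNest N) (L : Submodule ℂ (H →L[ℂ] H))
    (hLc : WClosed (L : Set (H →L[ℂ] H)))
    (hLie : ∀ T ∈ L, ∀ S ∈ nestAlg N, T * S - S * T ∈ L)
    (P : H →L[ℂ] H) (hP : P ∈ N)
    (hne : ∃ T ∈ L, (1 - P) * T * P ≠ 0) :
    {X | ∃ T ∈ L, X = P * T * (1 - P)} = {X | ∃ A : H →L[ℂ] H, X = P * A * (1 - P)} ∧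
    ∀ A : H →L[ℂ] H, P * A * (1 - P) ∈ L := by
  obtain ⟨T, hT, hTne⟩ := hne
  have hQ : IsSelfAdjoint (1 - P) := .sub (.one _) (hN.proj P hP).1
  obtain ⟨x₀, y₀, h₀⟩ := exists_inner_apply_ne_zero hTne
  have h₀' : ⟪(1 - P) x₀, T (P y₀)⟫_ℂ ≠ 0 := by
    rwa [← hQ.adjoint_eq, adjoint_inner_left]
  have hrank : ∀ x y, InnerProductSpace.rankOne ℂ (P y) ((1 - P) x) ∈ L :=
    L.mem_of_smul_add_smul_mem _ _
      (inner_smul_rankOne_add_inner_smul_rankOne_mem hN hLie hP hT) h₀'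
  have hcorner : ∀ A, P * A * (1 - P) ∈ L :=
    mul_mul_mem_of_rankOne_mem hLc fun x y ↦ by rw [hQ.adjoint_eq]; exact hrank y x
  refine ⟨Set.ext fun X ↦ ⟨?_, ?_⟩, hcorner⟩
  · rintro ⟨S, -, rfl⟩
    exact ⟨S, rfl⟩
  · rintro ⟨A, rfl⟩
    exact ⟨_, hcorner A, ((hN.proj P hP).2.mul_corner_mul A).symm⟩
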